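/- arXiv:2002.00002 — 6 statements merged into one kernel-verified Lean document; each statement's English description precedes it below -/
import Mathlib

section
/- For the complete bipartite graph K_{p,q} with 2 ≤ p ≤ q, the independent secure domination number equals p (one side of the bipartition of size p forms a minimum independent secure dominating set). -/
variable {V : Type*} [Fintype V] [DecidableEq V]

/-- `S` is a dominating set of `G`: every vertex is in `S` or adjacent to a vertex of `S`. -/
def DomSet (G : SimpleGraph V) (S : Finset V) : Prop :=
  ∀ v : V, v ∈ S ∨ ∃ u ∈ S, G.Adj u v

/-- `S` is a secure dominating set of `G`. -/
def SecDomSet (G : SimpleGraph V) (S : Finset V) : Prop :=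
  DomSet G S ∧ ∀ u ∉ S, ∃ v ∈ S, G.Adj u v ∧ DomSet G (insert u (S.erase v))

/-- `S` is an independent set of `G`. -/
def IndepSet (G : SimpleGraph V) (S : Finset V) : Prop :=
  ∀ a ∈ S, ∀ b ∈ S, ¬ G.Adj a b

/-- `S` is an independent secure dominating set of `G`. -/
def InSDS (G : SimpleGraph V) (S : Finset V) : Prop :=
  IndepSet G S ∧ SecDomSet G S

/-- The independent secure domination number `γ_is(G)`. -/
noncomputable def gammaIS (G : SimpleGraph V) : ℕ :=
  sInf {k | ∃ S : Finset V, InSDS G S ∧ S.card = k}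

/-!
An independent dominating set of `K_{p,q}` that meets one side misses the other, so it must
contain a whole side and has at least `min p q` vertices. Conversely the side `A` of size
`p ≥ 2` is secure: an outside vertex `b` replaces some `a ∈ A`, and then `b` dominates `a`
while the remaining (nonempty) part of `A` dominates the other side.
-/

theorem DomSet.mem_of_forall_not_adj {W : Type*} {G : SimpleGraph W} {T : Finset W}
    (hT : DomSet G T) {w : W} (hw : ∀ u ∈ T, ¬ G.Adj u w) : w ∈ T :=
  (hT w).resolve_right fun ⟨u, hu, huw⟩ => hw u hu huw

theorem gammaIS_eq_of_isLeast {W : Type*} [DecidableEq W] {G : SimpleGraph W} {n : ℕ}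
    {S : Finset W} (hS : InSDS G S)
    (hcard : S.card = n) (hmin : ∀ T, InSDS G T → n ≤ T.card) : gammaIS G = n :=
  IsLeast.csInf_eq ⟨⟨S, hS, hcard⟩, by rintro _ ⟨T, hT, rfl⟩; exact hmin T hT⟩

namespace completeBipartiteGraph

variable {α β : Type*} [DecidableEq α] [DecidableEq β] [Fintype α]

open Finset

theorem image_inl_subset_or_image_inr_subset [Fintype β] {T : Finset (α ⊕ β)}
    (hI : IndepSet (completeBipartiteGraph α β) T) (hD : DomSet (completeBipartiteGraph α β) T) :
    univ.image Sum.inl ⊆ T ∨ univ.image Sum.inr ⊆ T := by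
  by_cases hleft : ∃ a, Sum.inl a ∈ T
  · obtain ⟨a₀, ha₀⟩ := hleft
    have hright : ∀ b : β, Sum.inr b ∉ T := fun b hb => hI _ ha₀ _ hb (by simp)
    refine Or.inl fun _ hx => ?_
    obtain ⟨a, -, rfl⟩ := mem_image.1 hx
    refine hD.mem_of_forall_not_adj fun u hu => ?_
    rcases u with a' | b
    · simp
    · exact absurd hu (hright b)
  · push Not at hleft
    refine Or.inr fun _ hx => ?_
    obtain ⟨b, -, rfl⟩ := mem_image.1 hx
    refine hD.mem_of_forall_not_adj fun u hu => ?_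
    rcases u with a | b'
    · exact absurd hu (hleft a)
    · simp

theorem min_card_le_card [Fintype β] {T : Finset (α ⊕ β)}
    (hI : IndepSet (completeBipartiteGraph α β) T) (hD : DomSet (completeBipartiteGraph α β) T) :
    min (Fintype.card α) (Fintype.card β) ≤ T.card := by
  rcases image_inl_subset_or_image_inr_subset hI hD with h | h
  · calc min (Fintype.card α) (Fintype.card β) ≤ Fintype.card α := min_le_left _ _
      _ = (univ.image (Sum.inl : α → α ⊕ β)).card := by
        rw [card_image_of_injective _ Sum.inl_injective, card_univ]
      _ ≤ T.card := card_le_card h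
  · calc min (Fintype.card α) (Fintype.card β) ≤ Fintype.card β := min_le_right _ _
      _ = (univ.image (Sum.inr : β → α ⊕ β)).card := by
        rw [card_image_of_injective _ Sum.inr_injective, card_univ]
      _ ≤ T.card := card_le_card h

theorem inSDS_image_inl [Nontrivial α] :
    InSDS (completeBipartiteGraph α β) (univ.image Sum.inl) := by
  have hmem : ∀ a : α, Sum.inl a ∈ univ.image (Sum.inl : α → α ⊕ β) :=
    fun a => mem_image_of_mem _ (mem_univ a)
  obtain ⟨a₀⟩ := (inferInstance : Nonempty α)
  refine ⟨?_, ?_, ?_⟩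
  · intro _ hx _ hy
    obtain ⟨a, -, rfl⟩ := mem_image.1 hx
    obtain ⟨a', -, rfl⟩ := mem_image.1 hy
    simp
  · rintro (a | b)
    · exact Or.inl (hmem a)
    · exact Or.inr ⟨Sum.inl a₀, hmem a₀, by simp⟩
  · rintro (a | b) hu
    · exact absurd (hmem a) hu
    refine ⟨Sum.inl a₀, hmem a₀, by simp, ?_⟩
    obtain ⟨a₁, ha₁⟩ := exists_ne a₀
    rintro (a | b')
    · by_cases ha : a = a₀
      · exact Or.inr ⟨Sum.inr b, mem_insert_self _ _, by simp [ha]⟩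
      · exact Or.inl (mem_insert_of_mem (mem_erase.2 ⟨by simpa using ha, hmem a⟩))
    · exact Or.inr ⟨Sum.inl a₁, mem_insert_of_mem (mem_erase.2 ⟨by simpa using ha₁, hmem a₁⟩),
        by simp⟩

theorem gammaIS_eq [Fintype β] [Nontrivial α] (h : Fintype.card α ≤ Fintype.card β) :
    gammaIS (completeBipartiteGraph α β) = Fintype.card α := by
  refine gammaIS_eq_of_isLeast inSDS_image_inl ?_ fun T hT => ?_
  · rw [card_image_of_injective _ Sum.inl_injective, card_univ]
  · simpa [min_eq_left h] using min_card_le_card hT.1 hT.2.1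

end completeBipartiteGraph

theorem stmt3 (p q : ℕ) (hp : 2 ≤ p) (hpq : p ≤ q) :
    gammaIS (completeBipartiteGraph (Fin p) (Fin q)) = p ∧
    InSDS (completeBipartiteGraph (Fin p) (Fin q))
      (Finset.univ.image (Sum.inl : Fin p → Fin p ⊕ Fin q)) := by
  have : Nontrivial (Fin p) := Fin.nontrivial_iff_two_le.2 hp
  refine ⟨?_, completeBipartiteGraph.inSDS_image_inl⟩
  simpa using completeBipartiteGraph.gammaIS_eq (α := Fin p) (β := Fin q) (by simpa using hpq)
end

section
/- For the path graph P_n on n ≥ 4 vertices, the independent secure domination number equals ⌈3n/7⌉. -/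
variable {V : Type*} [Fintype V] [DecidableEq V]

/-!
The upper bound is an explicit set: the vertices in residues `0, 2, 4` (or `1, 3, 5`) mod `7`,
so consecutive gaps run `2, 2, 3, 2, 2, 3, …`.

For the lower bound, pad the path with the non-vertices `-1` and `n`. In an independent secure
dominating set every 3, 5 and 7 consecutive positions contain at least 1, 2 and 3 of its
vertices: the first is domination, and in a window of 5 or 7 with fewer vertices some middle
vertex has a defender that cannot move to it without leaving its far neighbour undominated.
Windows of these lengths cover the `n + 2` positions, so the set has at least
`⌊3 (n + 2) / 7⌋ = ⌈3 n / 7⌉` vertices.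
-/

open Finset

theorem DomSet.insert_erase {α : Type*} [DecidableEq α] {G : SimpleGraph α} {S : Finset α}
    {u v : α} (hS : DomSet G S) (huv : G.Adj u v)
    (hcov : ∀ w, G.Adj v w → w ≠ u → w ∈ S.erase v ∨ ∃ x ∈ S.erase v, G.Adj x w) :
    DomSet G (insert u (S.erase v)) := by
  intro w
  by_cases hwu : w = u
  · exact .inl (hwu ▸ mem_insert_self w _)
  by_cases hwv : w = v
  · exact .inr ⟨u, mem_insert_self u _, hwv ▸ huv⟩
  rcases hS w with hw | ⟨x, hx, hxw⟩
  · exact .inl (mem_insert_of_mem (mem_erase.2 ⟨hwv, hw⟩))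
  by_cases hxv : x = v
  · rcases hcov w (hxv ▸ hxw) hwu with h | ⟨y, hy, hyw⟩
    · exact .inl (mem_insert_of_mem h)
    · exact .inr ⟨y, mem_insert_of_mem hy, hyw⟩
  · exact .inr ⟨x, mem_insert_of_mem (mem_erase.2 ⟨hxv, hx⟩), hxw⟩

/-- The conditions defining an independent secure dominating set of the path `0 — 1 — ⋯ — (n-1)`,
read inside `ℤ` so that the non-vertices `-1` and `n` can be named. A vertex `u ∉ T` has a
defender `v ∈ T` next to it, and after the swap the vertex `2 * v - u` on the far side of `v`,
if it exists, must still be dominated without `v`. -/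
structure IsIntPathISDS (n : ℕ) (T : Finset ℤ) : Prop where
  indep : ∀ x ∈ T, ∀ y ∈ T, x + 1 ≠ y
  secure : ∀ u : ℤ, 0 ≤ u → u < n → u ∉ T → ∃ v ∈ T, (v + 1 = u ∨ u + 1 = v) ∧
    (2 * v - u < 0 ∨ n ≤ 2 * v - u ∨ ∃ x ∈ T, x ≠ v ∧ 2 * v - u ≤ x + 1 ∧ x ≤ 2 * v - u + 1)

namespace IsIntPathISDS

variable {n : ℕ} {T : Finset ℤ}

theorem exists_near (hT : IsIntPathISDS n T) {t : ℤ} (h0 : 0 ≤ t) (hn : t < n) :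
    ∃ x ∈ T, t ≤ x + 1 ∧ x ≤ t + 1 := by
  by_cases ht : t ∈ T
  · exact ⟨t, ht, by omega, by omega⟩
  · obtain ⟨v, hv, hvt, -⟩ := hT.secure t h0 hn ht
    exact ⟨v, hv, by omega, by omega⟩

theorem one_le_card_window (hT : IsIntPathISDS n T) {a : ℤ} (ha : -1 ≤ a) (h : a + 3 ≤ n + 1) :
    1 ≤ #(T ∩ Ico a (a + 3)) := by
  obtain ⟨x, hx, hx1, hx2⟩ := hT.exists_near (t := a + 1) (by omega) (by omega)
  exact card_pos.2 ⟨x, mem_inter.2 ⟨hx, mem_Ico.2 ⟨by omega, by omega⟩⟩⟩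

theorem two_le_card_window (hT : IsIntPathISDS n T) {a : ℤ} (ha : -1 ≤ a) (h : a + 5 ≤ n + 1) :
    2 ≤ #(T ∩ Ico a (a + 5)) := by
  by_contra! hlt
  have H := card_le_one.1 (Nat.le_of_lt_succ hlt)
  simp only [mem_inter, mem_Ico, and_imp] at H
  obtain ⟨x, hx, hx1, hx2⟩ := hT.exists_near (t := a + 1) (by omega) (by omega)
  obtain ⟨y, hy, hy1, hy2⟩ := hT.exists_near (t := a + 3) (by omega) (by omega)
  have hxy := H x hx (by omega) (by omega) y hy (by omega) (by omega)
  -- the only element of the window is `a + 2`; the swap at `a + 3` then uncovers `a + 1`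
  have h3 : a + 3 ∉ T := fun h3 => by
    have := H x hx (by omega) (by omega) _ h3 (by omega) (by omega)
    omega
  obtain ⟨v, hv, hvu, hfar⟩ := hT.secure (a + 3) (by omega) (by omega) h3
  have hvx := H v hv (by omega) (by omega) x hx (by omega) (by omega)
  rcases hfar with hfar | hfar | ⟨z, hz, hzv, hz1, hz2⟩
  · omega
  · omega
  · have := H z hz (by omega) (by omega) x hx (by omega) (by omega)
    omega

theorem three_le_card_window (hT : IsIntPathISDS n T) {a : ℤ} (ha : -1 ≤ a)
    (h : a + 7 ≤ n + 1) : 3 ≤ #(T ∩ Ico a (a + 7)) := by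
  by_contra! hlt
  have H : ∀ x ∈ T, a ≤ x → x < a + 7 → ∀ y ∈ T, a ≤ y → y < a + 7 →
      ∀ z ∈ T, a ≤ z → z < a + 7 → x = y ∨ x = z ∨ y = z := by
    intro x hx hx1 hx2 y hy hy1 hy2 z hz hz1 hz2
    by_contra! hne
    exact absurd (two_lt_card.2 ⟨x, mem_inter.2 ⟨hx, mem_Ico.2 ⟨hx1, hx2⟩⟩,
      y, mem_inter.2 ⟨hy, mem_Ico.2 ⟨hy1, hy2⟩⟩, z, mem_inter.2 ⟨hz, mem_Ico.2 ⟨hz1, hz2⟩⟩,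
      hne⟩) (by omega)
  -- dominators of `a + 1`, `a + 3`, `a + 5` are three vertices unless two of them meet at
  -- `a + 2` or `a + 4`; then the swap at `a + 3` forces a third vertex next to `a + 1` or `a + 5`
  obtain ⟨x, hx, hx1, hx2⟩ := hT.exists_near (t := a + 1) (by omega) (by omega)
  obtain ⟨y, hy, hy1, hy2⟩ := hT.exists_near (t := a + 3) (by omega) (by omega)
  obtain ⟨z, hz, hz1, hz2⟩ := hT.exists_near (t := a + 5) (by omega) (by omega)
  have hxyz := H x hx (by omega) (by omega) y hy (by omega) (by omega) z hz (by omega) (by omega)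
  by_cases h3 : a + 3 ∈ T
  · have := hT.indep _ h3 _ hz
    have := hT.indep _ hx _ h3
    have := H x hx (by omega) (by omega) _ h3 (by omega) (by omega) z hz (by omega) (by omega)
    omega
  obtain ⟨v, hv, hvu, hfar⟩ := hT.secure (a + 3) (by omega) (by omega) h3
  rcases hfar with hfar | hfar | ⟨w, hw, hwv, hw1, hw2⟩
  · omega
  · omega
  · have := H x hx (by omega) (by omega) v hv (by omega) (by omega) w hw (by omega) (by omega)
    have := H v hv (by omega) (by omega) w hw (by omega) (by omega) z hz (by omega) (by omega)
    omega

end IsIntPathISDS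

theorem card_inter_Ico_add (T : Finset ℤ) (a : ℤ) (m k : ℕ) :
    #(T ∩ Ico a (a + (m + k : ℕ))) = #(T ∩ Ico a (a + m)) + #(T ∩ Ico (a + m) (a + m + k)) := by
  rw [← card_union_of_disjoint, ← inter_union_distrib_left, Ico_union_Ico_eq_Ico (by omega)
    (by omega), Nat.cast_add, add_assoc]
  exact (Ico_disjoint_Ico_consecutive _ _ _).mono inter_subset_right inter_subset_right

theorem card_inter_Ico_mono (T : Finset ℤ) (a : ℤ) {m k : ℕ} (h : m ≤ k) :
    #(T ∩ Ico a (a + m)) ≤ #(T ∩ Ico a (a + k)) :=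
  card_le_card (inter_subset_inter_left (Ico_subset_Ico_right (by omega)))

/-- Split off windows of length `7`: `⌊3 L / 7⌋` drops by exactly `3` with each. -/
theorem le_card_inter_Ico_of_windows (T : Finset ℤ) {lo hi : ℤ}
    (h3 : ∀ a, lo ≤ a → a + 3 ≤ hi → 1 ≤ #(T ∩ Ico a (a + 3)))
    (h5 : ∀ a, lo ≤ a → a + 5 ≤ hi → 2 ≤ #(T ∩ Ico a (a + 5)))
    (h7 : ∀ a, lo ≤ a → a + 7 ≤ hi → 3 ≤ #(T ∩ Ico a (a + 7))) (L : ℕ) :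
    ∀ a, lo ≤ a → a + L ≤ hi → 3 * L / 7 ≤ #(T ∩ Ico a (a + L)) := by
  induction L using Nat.strong_induction_on with
  | _ L ih =>
    intro a ha hL
    by_cases hL3 : L < 3
    · omega
    by_cases hL5 : L < 5
    · have := h3 a ha (by omega)
      have := card_inter_Ico_mono T a (m := 3) (k := L) (by omega)
      push_cast at this
      omega
    by_cases hL7 : L < 7
    · have := h5 a ha (by omega)
      have := card_inter_Ico_mono T a (m := 5) (k := L) (by omega)
      push_cast at this
      omega
    obtain ⟨k, rfl⟩ : ∃ k, L = 7 + k := ⟨L - 7, by omega⟩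
    have hfirst := h7 a ha (by omega)
    have hrest := ih k (by omega) (a + 7) (by omega) (by push_cast at hL; omega)
    rw [card_inter_Ico_add]
    push_cast
    omega

theorem IsIntPathISDS.le_card {n : ℕ} {T : Finset ℤ} (hT : IsIntPathISDS n T) :
    (3 * n + 6) / 7 ≤ #T :=
  calc (3 * n + 6) / 7 = 3 * (n + 2) / 7 := by ring_nf
    _ ≤ #(T ∩ Ico (-1) (-1 + (n + 2 : ℕ))) :=
      le_card_inter_Ico_of_windows T (fun _ ha h => hT.one_le_card_window ha h)
        (fun _ ha h => hT.two_le_card_window ha h) (fun _ ha h => hT.three_le_card_window ha h)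
        (n + 2) (-1) le_rfl (by push_cast; omega)
    _ ≤ #T := card_le_card inter_subset_left

section PathGraph

variable {n : ℕ}

def intVertices (S : Finset (Fin n)) : Finset ℤ :=
  S.map (Fin.valEmbedding.trans Nat.castEmbedding)

theorem mem_intVertices {S : Finset (Fin n)} {x : ℤ} :
    x ∈ intVertices S ↔ ∃ v ∈ S, (v : ℤ) = x := by
  simp [intVertices]

theorem coe_mem_intVertices {S : Finset (Fin n)} {v : Fin n} :
    (v : ℤ) ∈ intVertices S ↔ v ∈ S := by
  simp [mem_intVertices, Fin.val_inj]

theorem card_intVertices (S : Finset (Fin n)) : #(intVertices S) = #S := card_map _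

theorem pathGraph_adj_iff_int {a b : Fin n} :
    (SimpleGraph.pathGraph n).Adj a b ↔ (a : ℤ) + 1 = b ∨ (b : ℤ) + 1 = a := by
  rw [SimpleGraph.pathGraph_adj]
  omega

theorem exists_fin_coe_eq {u : ℤ} (h0 : 0 ≤ u) (hn : u < n) : ∃ v : Fin n, (v : ℤ) = u :=
  ⟨⟨u.toNat, by omega⟩, Int.toNat_of_nonneg h0⟩

theorem InSDS.isIntPathISDS {S : Finset (Fin n)} (hS : InSDS (SimpleGraph.pathGraph n) S) :
    IsIntPathISDS n (intVertices S) where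
  indep := by
    simp only [mem_intVertices]
    rintro _ ⟨a, ha, rfl⟩ _ ⟨b, hb, rfl⟩ hab
    exact hS.1 a ha b hb (pathGraph_adj_iff_int.2 (.inl hab))
  secure := by
    intro u h0 hn hu
    obtain ⟨u, rfl⟩ := exists_fin_coe_eq h0 hn
    obtain ⟨v, hv, huv, hdom⟩ := hS.2.2 u (fun h => hu (coe_mem_intVertices.2 h))
    rw [pathGraph_adj_iff_int] at huv
    refine ⟨v, coe_mem_intVertices.2 hv, by omega, ?_⟩
    by_cases hw : 0 ≤ 2 * (v : ℤ) - u ∧ 2 * (v : ℤ) - u < n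
    · obtain ⟨w, hw⟩ := exists_fin_coe_eq hw.1 hw.2
      refine .inr (.inr ?_)
      rcases hdom w with hwS | ⟨x, hx, hxw⟩
      · rcases mem_insert.1 hwS with rfl | hwS
        · omega
        obtain ⟨hwv, hwS⟩ := mem_erase.1 hwS
        exact ⟨w, coe_mem_intVertices.2 hwS, by omega, by omega, by omega⟩
      · rw [pathGraph_adj_iff_int] at hxw
        rcases mem_insert.1 hx with rfl | hx
        · omega
        obtain ⟨hxv, hxS⟩ := mem_erase.1 hx
        exact ⟨x, coe_mem_intVertices.2 hxS, by omega, by omega, by omega⟩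
    · omega

theorem IsIntPathISDS.inSDS {S : Finset (Fin n)} (hT : IsIntPathISDS n (intVertices S)) :
    InSDS (SimpleGraph.pathGraph n) S := by
  have hdom : DomSet (SimpleGraph.pathGraph n) S := by
    intro t
    obtain ⟨x, hx, hx1, hx2⟩ := hT.exists_near (t := t) (by omega) (by omega)
    obtain ⟨x, hxS, rfl⟩ := mem_intVertices.1 hx
    by_cases hxt : x = t
    · exact .inl (hxt ▸ hxS)
    · exact .inr ⟨x, hxS, by rw [pathGraph_adj_iff_int]; omega⟩
  refine ⟨fun a ha b hb hab => ?_, hdom, fun u hu => ?_⟩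
  · rw [pathGraph_adj_iff_int] at hab
    rcases hab with hab | hab
    · exact hT.indep _ (coe_mem_intVertices.2 ha) _ (coe_mem_intVertices.2 hb) hab
    · exact hT.indep _ (coe_mem_intVertices.2 hb) _ (coe_mem_intVertices.2 ha) hab
  obtain ⟨_, hv, huv, hfar⟩ := hT.secure u (by omega) (by omega) (coe_mem_intVertices.not.2 hu)
  obtain ⟨v, hvS, rfl⟩ := mem_intVertices.1 hv
  have hadj : (SimpleGraph.pathGraph n).Adj u v := pathGraph_adj_iff_int.2 huv.symm
  refine ⟨v, hvS, hadj, hdom.insert_erase hadj fun w hvw hwu => ?_⟩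
  rw [pathGraph_adj_iff_int] at hvw
  rcases hfar with hfar | hfar | ⟨_, hx, hxv, hx1, hx2⟩
  · omega
  · omega
  obtain ⟨x, hxS, rfl⟩ := mem_intVertices.1 hx
  by_cases hxw : x = w
  · exact .inl (mem_erase.2 ⟨by omega, hxw ▸ hxS⟩)
  · exact .inr ⟨x, mem_erase.2 ⟨by omega, hxS⟩, by rw [pathGraph_adj_iff_int]; omega⟩

end PathGraph

/-- The extremal set repeats the gaps `2, 2, 3` with period `7`, on the residues `0, 2, 4` or
`1, 3, 5` according to the parity of `n % 7`; this phase makes the set close up at the right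
end of the path. -/
abbrev IsPatternVertex (r v : ℕ) : Prop := v % 7 < 6 ∧ (v % 7 + r) % 2 = 1

def patternSet (n : ℕ) : Finset (Fin n) := univ.filter fun v => IsPatternVertex (n % 7) v

theorem count_isPatternVertex (r k m : ℕ) :
    Nat.count (IsPatternVertex r) (7 * k + m) = 3 * k + Nat.count (IsPatternVertex r) m := by
  have hperiod : (fun j => IsPatternVertex r (7 + j)) = IsPatternVertex r := by
    funext j
    simp only [IsPatternVertex, Nat.add_mod_left]
  have hseven : Nat.count (IsPatternVertex r) 7 = 3 := by
    rcases Nat.mod_two_eq_zero_or_one r with h | h <;>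
      simp [Nat.count_succ, IsPatternVertex, Nat.add_mod _ r, h]
  induction k with
  | zero => simp
  | succ k ih =>
    rw [show 7 * (k + 1) + m = 7 + (7 * k + m) by ring, Nat.count_add]
    simp only [hperiod, hseven, ih]
    ring

theorem card_patternSet (n : ℕ) : #(patternSet n) = (3 * n + 6) / 7 := by
  have hcount : #(patternSet n) = Nat.count (IsPatternVertex (n % 7)) n := by
    rw [Nat.count_eq_card_filter_range, ← Nat.Iio_eq_range, ← Fin.map_valEmbedding_univ,
      filter_map, card_map]
    rfl
  have htail : ∀ r < 7, Nat.count (IsPatternVertex r) r = (3 * r + 6) / 7 := by decide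
  have hsplit := count_isPatternVertex (n % 7) (n / 7) (n % 7)
  rw [Nat.div_add_mod] at hsplit
  rw [hcount, hsplit, htail _ (Nat.mod_lt n (by norm_num))]
  omega

theorem mem_intVertices_patternSet {n : ℕ} {x : ℤ} :
    x ∈ intVertices (patternSet n) ↔ 0 ≤ x ∧ x < n ∧ x % 7 < 6 ∧ (x % 7 + n % 7) % 2 = 1 := by
  constructor
  · rw [mem_intVertices]
    rintro ⟨v, hv, rfl⟩
    simp only [patternSet, mem_filter, mem_univ, true_and] at hv
    omega
  · intro hx
    obtain ⟨v, rfl⟩ := exists_fin_coe_eq hx.1 hx.2.1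
    rw [coe_mem_intVertices]
    simp only [patternSet, mem_filter, mem_univ, true_and]
    omega

theorem patternSet_secure {n : ℕ} {u : ℤ} (h0 : 0 ≤ u) (hn : u < n)
    (hu : u ∉ intVertices (patternSet n)) :
    (u + 1 ∈ intVertices (patternSet n) ∧ (n ≤ u + 2 ∨ u + 3 ∈ intVertices (patternSet n))) ∨
      (u - 1 ∈ intVertices (patternSet n) ∧ (u - 2 < 0 ∨ u - 3 ∈ intVertices (patternSet n))) := by
  simp only [mem_intVertices_patternSet] at *
  have hu7 : u % 7 = 0 ∨ u % 7 = 1 ∨ u % 7 = 2 ∨ u % 7 = 3 ∨ u % 7 = 4 ∨ u % 7 = 5 ∨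
    u % 7 = 6 := by omega
  rcases hu7 with h | h | h | h | h | h | h <;>
    simp only [Int.add_emod u, Int.sub_emod u, h] at hu ⊢ <;> norm_num at hu ⊢ <;> omega

theorem isIntPathISDS_patternSet (n : ℕ) : IsIntPathISDS n (intVertices (patternSet n)) where
  indep x hx y hy := by
    rw [mem_intVertices_patternSet] at hx hy
    omega
  secure u h0 hn hu := by
    rcases patternSet_secure h0 hn hu with ⟨h1, h3 | h3⟩ | ⟨h1, h3 | h3⟩
    · exact ⟨u + 1, h1, .inr rfl, .inr (.inl (by omega))⟩
    · exact ⟨u + 1, h1, .inr rfl, .inr (.inr ⟨u + 3, h3, by omega, by omega, by omega⟩)⟩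
    · exact ⟨u - 1, h1, .inl (by ring), .inl (by omega)⟩
    · exact ⟨u - 1, h1, .inl (by ring), .inr (.inr ⟨u - 3, h3, by omega, by omega, by omega⟩)⟩

theorem stmt6_general (n : ℕ) :
    gammaIS (SimpleGraph.pathGraph n) = (3 * n + 6) / 7 := by
  refine IsLeast.csInf_eq
    ⟨⟨patternSet n, (isIntPathISDS_patternSet n).inSDS, card_patternSet n⟩, ?_⟩
  rintro _ ⟨S, hS, rfl⟩
  simpa [card_intVertices] using hS.isIntPathISDS.le_card

theorem stmt6 (n : ℕ) (hn : 4 ≤ n) :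
    gammaIS (SimpleGraph.pathGraph n) = (3 * n + 6) / 7 :=
  stmt6_general n
end

section
/- Let G be a non-complete graph admitting an independent secure dominating set. Then the join K_1 + G (adding one new vertex adjacent to all vertices of G) satisfies γ_is(K_1 + G) = γ_is(G). -/
variable {V : Type*} [Fintype V] [DecidableEq V]

/-- The join `K₁ + G`: a new vertex `none` adjacent to every vertex of `G`. -/
def joinOne (G : SimpleGraph V) : SimpleGraph (Option V) :=
  SimpleGraph.fromRel (fun x y =>
    (x = none ∧ y ≠ none) ∨ (∃ a b, x = some a ∧ y = some b ∧ G.Adj a b))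

/-!
The vertices of `G` sit in `K₁ + G` as `some`, and `S ↦ S.image some` preserves and reflects
being an independent secure dominating set as long as `S ≠ ∅` (the apex `none` must be dominated,
and any vertex of `S` can be swapped for it). Conversely, an independent secure dominating set of
`K₁ + G` cannot contain the apex when `G` is not complete: independence forces it to be `{none}`,
and swapping the apex for a vertex `a` of `G` leaves a vertex `b ≠ a` non-adjacent to `a`
undominated. So both graphs have the same set of sizes of independent secure dominating sets.
-/

open Finset

section

omit [Fintype V] [DecidableEq V]

variable {G : SimpleGraph V}

lemma DomSet.nonempty [Nonempty V] {S : Finset V} (h : DomSet G S) :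
    S.Nonempty := by
  obtain ⟨v⟩ := ‹Nonempty V›
  rcases h v with hv | ⟨u, hu, -⟩
  exacts [⟨v, hv⟩, ⟨u, hu⟩]

namespace joinOne

@[simp]
lemma adj_some_some {a b : V} : (joinOne G).Adj (some a) (some b) ↔ G.Adj a b := by
  simpa [joinOne, G.adj_comm b a] using G.ne_of_adj

@[simp]
lemma adj_none_some (a : V) : (joinOne G).Adj none (some a) := by
  simp [joinOne]

lemma domSet_of_none_mem {T : Finset (Option V)} (h : none ∈ T) : DomSet (joinOne G) T
  | none => .inl h
  | some a => .inr ⟨none, h, adj_none_some a⟩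

end joinOne

end

namespace joinOne

omit [Fintype V]

variable {G : SimpleGraph V} {S : Finset V}

lemma domSet_image_some_iff (hS : S.Nonempty) :
    DomSet (joinOne G) (S.image some) ↔ DomSet G S := by
  refine ⟨fun h v => by simpa using h (some v), fun h => ?_⟩
  rintro (_ | v)
  · obtain ⟨w, hw⟩ := hS
    exact .inr ⟨some w, mem_image_of_mem _ hw, (adj_none_some w).symm⟩
  · simpa using h v

lemma indepSet_image_some_iff : IndepSet (joinOne G) (S.image some) ↔ IndepSet G S := by
  simp [IndepSet]

lemma secDomSet_image_some_iff (hS : S.Nonempty) :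
    SecDomSet (joinOne G) (S.image some) ↔ SecDomSet G S := by
  have swap (u v : V) :
      insert (some u) ((S.image some).erase (some v)) = (insert u (S.erase v)).image some := by
    rw [image_insert, image_erase (Option.some_injective V)]
  have swap_domSet_iff (u v : V) :
      DomSet (joinOne G) (insert (some u) ((S.image some).erase (some v))) ↔
        DomSet G (insert u (S.erase v)) := by
    rw [swap, domSet_image_some_iff (insert_nonempty _ _)]
  rw [SecDomSet, SecDomSet, domSet_image_some_iff hS]
  refine and_congr_right fun _ => ⟨fun h u hu => ?_, fun h => ?_⟩
  · obtain ⟨_ | w, hw, hadj, hdom⟩ := h (some u) (by simpa using hu)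
    · simp at hw
    · exact ⟨w, by simpa using hw, by simpa using hadj, (swap_domSet_iff u w).mp hdom⟩
  rintro (_ | u) hu
  · obtain ⟨w, hw⟩ := hS
    exact ⟨some w, mem_image_of_mem _ hw, adj_none_some w,
      domSet_of_none_mem (mem_insert_self _ _)⟩
  · obtain ⟨w, hw, hadj, hdom⟩ := h u (by simpa using hu)
    exact ⟨some w, mem_image_of_mem _ hw, by simpa using hadj, (swap_domSet_iff u w).mpr hdom⟩

lemma inSDS_image_some_iff (hS : S.Nonempty) :
    InSDS (joinOne G) (S.image some) ↔ InSDS G S := by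
  rw [InSDS, InSDS, indepSet_image_some_iff, secDomSet_image_some_iff hS]

lemma none_notMem_of_inSDS (hnc : ∃ a b : V, a ≠ b ∧ ¬ G.Adj a b) {T : Finset (Option V)}
    (hT : InSDS (joinOne G) T) : none ∉ T := by
  obtain ⟨a, b, hab, hnadj⟩ := hnc
  intro hnone
  have hsome (x : V) : some x ∉ T := fun hx => hT.1 none hnone (some x) hx (adj_none_some x)
  have hT_eq : T = {none} := eq_singleton_iff_unique_mem.2
    ⟨hnone, fun | none, _ => rfl | some x, hx => absurd hx (hsome x)⟩
  subst hT_eq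
  obtain ⟨v, hv, -, hdom⟩ := hT.2.2 (some a) (by simp)
  rw [mem_singleton] at hv
  subst hv
  rw [erase_singleton, insert_empty] at hdom
  rcases hdom (some b) with hb | ⟨u, hu, hadj⟩
  · exact hab (Option.some_injective V (mem_singleton.1 hb)).symm
  · rw [mem_singleton.1 hu, adj_some_some] at hadj
    exact hnadj hadj

lemma exists_inSDS_card_iff (hnc : ∃ a b : V, a ≠ b ∧ ¬ G.Adj a b) (k : ℕ) :
    (∃ T, InSDS (joinOne G) T ∧ T.card = k) ↔ ∃ S, InSDS G S ∧ S.card = k := by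
  have : Nonempty V := let ⟨a, _⟩ := hnc; ⟨a⟩
  constructor
  · rintro ⟨T, hT, rfl⟩
    have hnone := none_notMem_of_inSDS hnc hT
    have hT_eq : T.eraseNone.image some = T := by
      rw [image_some_eraseNone, erase_eq_of_notMem hnone]
    have hne : T.eraseNone.Nonempty := by
      rw [← image_nonempty (f := some), hT_eq]
      exact hT.2.1.nonempty
    refine ⟨T.eraseNone, ?_, card_eraseNone_of_not_mem hnone⟩
    rw [← inSDS_image_some_iff hne, hT_eq]
    exact hT
  · rintro ⟨S, hS, rfl⟩
    exact ⟨S.image some, (inSDS_image_some_iff hS.2.1.nonempty).2 hS,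
      card_image_of_injective _ (Option.some_injective V)⟩

end joinOne

theorem stmt9_general (G : SimpleGraph V) (hnc : ∃ a b : V, a ≠ b ∧ ¬ G.Adj a b) :
    gammaIS (joinOne G) = gammaIS G := by
  unfold gammaIS
  congr 1
  ext k
  exact joinOne.exists_inSDS_card_iff hnc k

theorem stmt9 (G : SimpleGraph V) (hnc : ∃ a b : V, a ≠ b ∧ ¬ G.Adj a b)
    (hex : ∃ S : Finset V, InSDS G S) :
    gammaIS (joinOne G) = gammaIS G :=
  stmt9_general G hnc
end

section
/- Let G be a connected threshold graph with split partition (C, I) where C is a clique and I is an independent set. If there exists c₀ ∈ C with no neighbor in I, then I ∪ {c₀} is a minimum independent secure dominating set of G; otherwise, I itself is a minimum independent secure dominating set of G. -/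
/-! An independent set `S` contains at most one clique vertex, so when a vertex `i ∈ I \ S` is
defended by `v ∈ S`, the swapped set `insert i (S.erase v)` lies inside `I`. Being dominating and
contained in the independent set `I`, it must be all of `I`, whence `|I| ≤ |S|`. It cannot
dominate a clique vertex without neighbours in `I`; if there is one, then `I ⊆ S`, and `S` also
needs a clique vertex to dominate it. -/

variable {V : Type*} [Fintype V] [DecidableEq V]

section SplitGraph

variable {W : Type*}

structure IsSplitPartition (G : SimpleGraph W) (C I : Finset W) : Prop where
  cover : ∀ v : W, v ∈ C ∨ v ∈ I
  disjoint : Disjoint C I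
  isClique : ∀ a ∈ C, ∀ b ∈ C, a ≠ b → G.Adj a b
  indepSet : IndepSet G I

theorem card_eq_gammaIS_of_forall_card_le [DecidableEq W] {G : SimpleGraph W} {S : Finset W}
    (hS : InSDS G S) (hmin : ∀ T, InSDS G T → S.card ≤ T.card) : S.card = gammaIS G :=
  le_antisymm (le_csInf ⟨S.card, S, hS, rfl⟩ fun _ ⟨T, hT, hk⟩ => hk ▸ hmin T hT)
    (Nat.sInf_le ⟨S, hS, rfl⟩)

namespace IsSplitPartition

variable {G : SimpleGraph W} {C I S T : Finset W} {c₀ u : W}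

theorem notMem_of_mem_C (h : IsSplitPartition G C I) (hu : u ∈ C) : u ∉ I :=
  Finset.disjoint_left.mp h.disjoint hu

theorem mem_C_of_not_mem (h : IsSplitPartition G C I) (hu : u ∉ I) : u ∈ C :=
  (h.cover u).resolve_right hu

theorem subset_of_domSet_of_subset (h : IsSplitPartition G C I) (hTI : T ⊆ I)
    (hT : DomSet G T) : I ⊆ T := by
  intro i hi
  rcases hT i with hiT | ⟨u, huT, hadj⟩
  · exact hiT
  · exact absurd hadj (h.indepSet u (hTI huT) i hi)

variable [DecidableEq W]

theorem domSet_insert (h : IsSplitPartition G C I) (hu : u ∈ C)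
    (hT : ∀ i ∈ I, i ∈ T ∨ G.Adj u i) : DomSet G (insert u T) := by
  intro w
  rcases h.cover w with hwC | hwI
  · by_cases hwu : w = u
    · exact Or.inl (hwu ▸ Finset.mem_insert_self w T)
    · exact Or.inr ⟨u, Finset.mem_insert_self u T, h.isClique u hu w hwC (Ne.symm hwu)⟩
  · rcases hT w hwI with hwT | hadj
    · exact Or.inl (Finset.mem_insert_of_mem hwT)
    · exact Or.inr ⟨u, Finset.mem_insert_self u T, hadj⟩

theorem erase_subset_of_indepSet (h : IsSplitPartition G C I) (hS : IndepSet G S) {v : W}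
    (hvS : v ∈ S) (hvC : v ∈ C) : S.erase v ⊆ I := by
  intro x hx
  obtain ⟨hxv, hxS⟩ := Finset.mem_erase.mp hx
  by_contra hxI
  exact hS x hxS v hvS (h.isClique x (h.mem_C_of_not_mem hxI) v hvC hxv)

theorem exists_swap_subset (h : IsSplitPartition G C I) (hS : InSDS G S) {i : W} (hi : i ∈ I)
    (hiS : i ∉ S) : ∃ v ∈ S, insert i (S.erase v) ⊆ I ∧ DomSet G (insert i (S.erase v)) := by
  obtain ⟨v, hvS, hadj, hdom⟩ := hS.2.2 i hiS
  have hvC : v ∈ C := h.mem_C_of_not_mem fun hvI => h.indepSet i hi v hvI hadj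
  exact ⟨v, hvS, Finset.insert_subset hi (h.erase_subset_of_indepSet hS.1 hvS hvC), hdom⟩

theorem card_le_card_of_inSDS (h : IsSplitPartition G C I) (hS : InSDS G S) :
    I.card ≤ S.card := by
  by_cases hIS : I ⊆ S
  · exact Finset.card_le_card hIS
  obtain ⟨i, hi, hiS⟩ := Finset.not_subset.mp hIS
  obtain ⟨v, hvS, hsub, hdom⟩ := h.exists_swap_subset hS hi hiS
  calc I.card ≤ (insert i (S.erase v)).card :=
        Finset.card_le_card (h.subset_of_domSet_of_subset hsub hdom)
    _ ≤ (S.erase v).card + 1 := Finset.card_insert_le i _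
    _ = S.card := Finset.card_erase_add_one hvS

theorem subset_of_inSDS (h : IsSplitPartition G C I) (hc₀ : c₀ ∈ C)
    (hno : ∀ i ∈ I, ¬ G.Adj c₀ i) (hS : InSDS G S) : I ⊆ S := by
  intro i hi
  by_contra hiS
  obtain ⟨v, -, hsub, hdom⟩ := h.exists_swap_subset hS hi hiS
  rcases hdom c₀ with hc₀T | ⟨u, huT, hadj⟩
  · exact h.notMem_of_mem_C hc₀ (hsub hc₀T)
  · exact hno u (hsub huT) hadj.symm

theorem card_insert_le_card_of_inSDS (h : IsSplitPartition G C I) (hc₀ : c₀ ∈ C)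
    (hno : ∀ i ∈ I, ¬ G.Adj c₀ i) (hS : InSDS G S) : (insert c₀ I).card ≤ S.card := by
  have hcS : ∃ c ∈ S, c ∈ C := by
    rcases hS.2.1 c₀ with hc₀S | ⟨u, huS, hadj⟩
    · exact ⟨c₀, hc₀S, hc₀⟩
    · exact ⟨u, huS, h.mem_C_of_not_mem fun huI => hno u huI hadj.symm⟩
  obtain ⟨c, hcS, hcC⟩ := hcS
  calc (insert c₀ I).card = (insert c I).card := by
        rw [Finset.card_insert_of_notMem (h.notMem_of_mem_C hc₀),
          Finset.card_insert_of_notMem (h.notMem_of_mem_C hcC)]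
    _ ≤ S.card := Finset.card_le_card (Finset.insert_subset hcS (h.subset_of_inSDS hc₀ hno hS))

theorem inSDS_insert (h : IsSplitPartition G C I) (hc₀ : c₀ ∈ C)
    (hno : ∀ i ∈ I, ¬ G.Adj c₀ i) : InSDS G (insert c₀ I) := by
  refine ⟨?_, h.domSet_insert hc₀ fun i hi => Or.inl hi, fun u hu => ?_⟩
  · intro a ha b hb
    rcases Finset.mem_insert.mp ha with rfl | haI <;> rcases Finset.mem_insert.mp hb with rfl | hbI
    · exact G.irrefl
    · exact hno b hbI
    · exact fun hab => hno a haI hab.symm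
    · exact h.indepSet a haI b hbI
  have huC : u ∈ C := h.mem_C_of_not_mem fun huI => hu (Finset.mem_insert_of_mem huI)
  have huc₀ : u ≠ c₀ := fun hu₀ => hu (hu₀ ▸ Finset.mem_insert_self u I)
  refine ⟨c₀, Finset.mem_insert_self c₀ I, h.isClique u huC c₀ hc₀ huc₀, ?_⟩
  rw [Finset.erase_insert (h.notMem_of_mem_C hc₀)]
  exact h.domSet_insert huC fun i hi => Or.inl hi

theorem inSDS_of_forall_exists_adj (h : IsSplitPartition G C I) (hall : ∀ c ∈ C, ∃ i ∈ I, G.Adj c i) :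
    InSDS G I := by
  refine ⟨h.indepSet, fun v => ?_, fun u huI => ?_⟩
  · rcases h.cover v with hvC | hvI
    · obtain ⟨i, hi, hadj⟩ := hall v hvC
      exact Or.inr ⟨i, hi, hadj.symm⟩
    · exact Or.inl hvI
  have huC : u ∈ C := h.mem_C_of_not_mem huI
  obtain ⟨i, hi, hadj⟩ := hall u huC
  refine ⟨i, hi, hadj, h.domSet_insert huC fun j hj => ?_⟩
  by_cases hji : j = i
  · exact Or.inr (hji ▸ hadj)
  · exact Or.inl (Finset.mem_erase.mpr ⟨hji, hj⟩)

end IsSplitPartition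

end SplitGraph

theorem stmt11_general (G : SimpleGraph V) (C I : Finset V)
    (hpart : ∀ v : V, v ∈ C ∨ v ∈ I) (hdisj : Disjoint C I)
    (hclique : ∀ a ∈ C, ∀ b ∈ C, a ≠ b → G.Adj a b)
    (hindep : ∀ a ∈ I, ∀ b ∈ I, ¬ G.Adj a b) :
    (∀ c₀ ∈ C, (∀ i ∈ I, ¬ G.Adj c₀ i) →
      InSDS G (insert c₀ I) ∧ (insert c₀ I).card = gammaIS G) ∧
    ((∀ c ∈ C, ∃ i ∈ I, G.Adj c i) →
      InSDS G I ∧ I.card = gammaIS G) := by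
  have h : IsSplitPartition G C I := ⟨hpart, hdisj, hclique, hindep⟩
  refine ⟨fun c₀ hc₀ hno => ?_, fun hall => ?_⟩
  · have hmem := h.inSDS_insert hc₀ hno
    exact ⟨hmem, card_eq_gammaIS_of_forall_card_le hmem fun S hS =>
      h.card_insert_le_card_of_inSDS hc₀ hno hS⟩
  · have hmem := h.inSDS_of_forall_exists_adj hall
    exact ⟨hmem, card_eq_gammaIS_of_forall_card_le hmem fun S hS => h.card_le_card_of_inSDS hS⟩

theorem stmt11 (G : SimpleGraph V) (C I : Finset V)
    (hpart : ∀ v : V, v ∈ C ∨ v ∈ I) (hdisj : Disjoint C I)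
    (hclique : ∀ a ∈ C, ∀ b ∈ C, a ≠ b → G.Adj a b)
    (hindep : ∀ a ∈ I, ∀ b ∈ I, ¬ G.Adj a b)
    (hC : ∀ x ∈ C, ∀ y ∈ C,
      (∀ z, (G.Adj x z ∨ z = x) → (G.Adj y z ∨ z = y)) ∨
      (∀ z, (G.Adj y z ∨ z = y) → (G.Adj x z ∨ z = x)))
    (hI : ∀ x ∈ I, ∀ y ∈ I,
      (∀ z, G.Adj x z → G.Adj y z) ∨ (∀ z, G.Adj y z → G.Adj x z))
    (hconn : G.Connected) :
    (∀ c₀ ∈ C, (∀ i ∈ I, ¬ G.Adj c₀ i) →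
      InSDS G (insert c₀ I) ∧ (insert c₀ I).card = gammaIS G) ∧
    ((∀ c ∈ C, ∃ i ∈ I, G.Adj c i) →
      InSDS G I ∧ I.card = gammaIS G) :=
  stmt11_general G C I hpart hdisj hclique hindep
end

section
/- Let G=(V,E) be a graph with V = {v_1,...,v_n}, and construct G' by adding, for each i, new vertices a_i, b_i and edges (v_i, a_i), (a_i, b_i). Then G has an independent dominating set of size at most k if and only if G' has an independent secure dominating set of size at most n + k. -/
variable {V : Type*} [Fintype V] [DecidableEq V]

/-- `G` with a pendant path `vᵢ – aᵢ – bᵢ` attached to each vertex `vᵢ`: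
`aᵢ = Sum.inr (Sum.inl i)`, `bᵢ = Sum.inr (Sum.inr i)`. -/
def extPath2 (G : SimpleGraph V) : SimpleGraph (V ⊕ V ⊕ V) :=
  SimpleGraph.fromRel (fun x y =>
    (∃ a b, x = Sum.inl a ∧ y = Sum.inl b ∧ G.Adj a b) ∨
    (∃ a, x = Sum.inl a ∧ y = Sum.inr (Sum.inl a)) ∨
    (∃ a, x = Sum.inr (Sum.inl a) ∧ y = Sum.inr (Sum.inr a)))

/-!
Given an independent dominating set `D` of `G`, take `vᵢ, bᵢ` for `i ∈ D` and `aᵢ` for `i ∉ D`.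
It is independent and dominating; an outside `vᵢ` is guarded by a `G`-neighbour `v_d`, `d ∈ D`
(after the swap `a_d` is still dominated by `b_d`, and every other `v_y` by `a_y`), and an
outside `aᵢ` or `bᵢ` by its neighbour on the pendant path.

Conversely, every dominating set `S` of `G'` meets each `{aᵢ, bᵢ}`, so `|S| ≥ n + |D|` where `D`
is the set of original vertices in `S`. This `D` is independent, and it dominates `G`: an outside
`v_w` cannot be guarded by `a_w`, since after that swap `b_w` is dominated only if `b_w ∈ S`,
which together with `a_w ∈ S` violates independence.
-/

open Finset Sum

theorem DomSet.insert_erase_of_adj {α : Type*} [DecidableEq α] {G : SimpleGraph α}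
    {S : Finset α} {u v : α} (hS : DomSet G S) (huv : G.Adj u v)
    (hpriv : ∀ x ∉ S, x ≠ u → G.Adj v x → G.Adj u x ∨ ∃ w ∈ S.erase v, G.Adj w x) :
    DomSet G (insert u (S.erase v)) := by
  intro x
  by_cases hxu : x = u
  · exact .inl (hxu ▸ mem_insert_self _ _)
  by_cases hxv : x = v
  · exact .inr ⟨u, mem_insert_self _ _, hxv ▸ huv⟩
  by_cases hx : x ∈ S
  · exact .inl (mem_insert_of_mem (mem_erase.2 ⟨hxv, hx⟩))
  obtain ⟨y, hy, hyx⟩ := (hS x).resolve_left hx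
  by_cases hyv : y = v
  · subst hyv
    rcases hpriv x hx hxu hyx with hux | ⟨w, hw, hwx⟩
    · exact .inr ⟨u, mem_insert_self _ _, hux⟩
    · exact .inr ⟨w, mem_insert_of_mem hw, hwx⟩
  · exact .inr ⟨y, mem_insert_of_mem (mem_erase.2 ⟨hyv, hy⟩), hyx⟩

section Adjacency

variable {α : Type*} {G : SimpleGraph α} {a b : α}

@[simp] lemma extPath2_adj_inl_inl : (extPath2 G).Adj (inl a) (inl b) ↔ G.Adj a b := by
  simpa [extPath2, G.adj_comm b a] using G.ne_of_adj
@[simp] lemma extPath2_adj_inl_inr_inl : (extPath2 G).Adj (inl a) (inr (inl b)) ↔ a = b := by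
  simp [extPath2, eq_comm]
@[simp] lemma extPath2_adj_inr_inl_inl : (extPath2 G).Adj (inr (inl a)) (inl b) ↔ a = b := by
  simp [extPath2, eq_comm]
@[simp] lemma extPath2_adj_inr_inl_inr_inr :
    (extPath2 G).Adj (inr (inl a)) (inr (inr b)) ↔ a = b := by
  simp [extPath2, eq_comm]
@[simp] lemma extPath2_adj_inr_inr_inr_inl :
    (extPath2 G).Adj (inr (inr a)) (inr (inl b)) ↔ a = b := by
  simp [extPath2, eq_comm]
@[simp] lemma extPath2_not_adj_inl_inr_inr : ¬ (extPath2 G).Adj (inl a) (inr (inr b)) := by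
  simp [extPath2]
@[simp] lemma extPath2_not_adj_inr_inr_inl : ¬ (extPath2 G).Adj (inr (inr a)) (inl b) := by
  simp [extPath2]
@[simp] lemma extPath2_not_adj_inr_inl_inr_inl :
    ¬ (extPath2 G).Adj (inr (inl a)) (inr (inl b)) := by
  simp [extPath2]
@[simp] lemma extPath2_not_adj_inr_inr_inr_inr :
    ¬ (extPath2 G).Adj (inr (inr a)) (inr (inr b)) := by
  simp [extPath2]

end Adjacency

section Lift

variable {α : Type*} [Fintype α] [DecidableEq α] {G : SimpleGraph α} {D : Finset α}

/-- `vᵢ` and `bᵢ` for `i ∈ D`, `aᵢ` for `i ∉ D`. -/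
def extPath2Lift (D : Finset α) : Finset (α ⊕ α ⊕ α) := D.disjSum (Dᶜ.disjSum D)

@[simp] lemma inl_mem_extPath2Lift {v : α} : inl v ∈ extPath2Lift D ↔ v ∈ D := by
  simp [extPath2Lift]
@[simp] lemma inr_inl_mem_extPath2Lift {v : α} : inr (inl v) ∈ extPath2Lift D ↔ v ∉ D := by
  simp [extPath2Lift]
@[simp] lemma inr_inr_mem_extPath2Lift {v : α} : inr (inr v) ∈ extPath2Lift D ↔ v ∈ D := by
  simp [extPath2Lift]

lemma card_extPath2Lift (D : Finset α) : #(extPath2Lift D) = Fintype.card α + #D := by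
  simp only [extPath2Lift, card_disjSum, card_compl]
  have := D.card_le_univ
  omega

lemma IndepSet.extPath2Lift (hD : IndepSet G D) : IndepSet (extPath2 G) (extPath2Lift D) := by
  rintro (a | a | a) ha (b | b | b) hb hab <;> simp_all
  exact hD a ha b hb hab

lemma domSet_extPath2Lift (D : Finset α) : DomSet (extPath2 G) (extPath2Lift D) := by
  rintro (v | v | v) <;> by_cases hv : v ∈ D
  · exact .inl (by simpa)
  · exact .inr ⟨inr (inl v), by simpa, by simp⟩
  · exact .inr ⟨inl v, by simpa, by simp⟩
  · exact .inl (by simpa)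
  · exact .inl (by simpa)
  · exact .inr ⟨inr (inl v), by simpa, by simp⟩

lemma DomSet.secDomSet_extPath2Lift (hD : DomSet G D) :
    SecDomSet (extPath2 G) (extPath2Lift D) := by
  refine ⟨domSet_extPath2Lift D, ?_⟩
  rintro (w | w | w) hw <;>
    simp only [inl_mem_extPath2Lift, inr_inl_mem_extPath2Lift, inr_inr_mem_extPath2Lift,
      not_not] at hw
  · obtain ⟨d, hd, hdw⟩ := (hD w).resolve_left hw
    refine ⟨inl d, by simpa, by simpa using hdw.symm,
      (domSet_extPath2Lift D).insert_erase_of_adj (by simpa using hdw.symm) ?_⟩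
    rintro (x | x | x) hx hxw hdx <;> simp at hx hxw hdx
    · exact .inr ⟨inr (inl x), by simp [hx], by simp⟩
    · exact .inr ⟨inr (inr x), by simp [hx], by simp⟩
  · refine ⟨inr (inr w), by simpa, by simp,
      (domSet_extPath2Lift D).insert_erase_of_adj (by simp) ?_⟩
    rintro (x | x | x) hx hxw hwx <;> simp_all
  · obtain ⟨d, hd, hdw⟩ := (hD w).resolve_left hw
    refine ⟨inr (inl w), by simpa, by simp,
      (domSet_extPath2Lift D).insert_erase_of_adj (by simp) ?_⟩
    rintro (x | x | x) hx hxw hwx <;> simp at hx hxw hwx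
    · exact .inr ⟨inl d, by simp [hd], by simpa [← hwx]⟩
    · exact absurd hwx.symm hxw

end Lift

section Restrict

variable {α : Type*} {G : SimpleGraph α} {S : Finset (α ⊕ α ⊕ α)}

lemma DomSet.inr_inl_mem_or_inr_inr_mem (hS : DomSet (extPath2 G) S) (i : α) :
    inr (inl i) ∈ S ∨ inr (inr i) ∈ S := by
  rcases hS (inr (inr i)) with h | ⟨u, hu, hui⟩
  · exact .inr h
  · rcases u with u | u | u <;> simp at hui
    exact .inl (hui ▸ hu)

lemma DomSet.card_add_card_toLeft_le [Fintype α] [DecidableEq α]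
    (hS : DomSet (extPath2 G) S) : Fintype.card α + #S.toLeft ≤ #S := by
  have hcover : S.toRight.toLeft ∪ S.toRight.toRight = univ := by
    ext i
    simpa using hS.inr_inl_mem_or_inr_inr_mem i
  calc Fintype.card α + #S.toLeft
      = #(S.toRight.toLeft ∪ S.toRight.toRight) + #S.toLeft := by rw [hcover, card_univ]
    _ ≤ #S.toRight.toLeft + #S.toRight.toRight + #S.toLeft := by grw [card_union_le]
    _ = #S := by rw [card_toLeft_add_card_toRight, add_comm, card_toLeft_add_card_toRight]

lemma IndepSet.toLeft (hS : IndepSet (extPath2 G) S) : IndepSet G S.toLeft :=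
  fun a ha b hb hab => hS _ (mem_toLeft.1 ha) _ (mem_toLeft.1 hb) (by simpa)

lemma InSDS.domSet_toLeft [DecidableEq α] (hS : InSDS (extPath2 G) S) : DomSet G S.toLeft := by
  obtain ⟨hI, -, hsec⟩ := hS
  intro w
  by_cases hw : inl w ∈ S
  · exact .inl (mem_toLeft.2 hw)
  obtain ⟨v, hv, hwv, hswap⟩ := hsec (inl w) hw
  rcases v with v | v | v <;> simp at hwv
  · exact .inr ⟨v, mem_toLeft.2 hv, hwv.symm⟩
  · subst hwv
    have hb : inr (inr w) ∈ S := by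
      simpa using hswap.inr_inl_mem_or_inr_inr_mem w
    exact (hI _ hv _ hb (by simp)).elim

end Restrict

theorem stmt12 (G : SimpleGraph V) (n k : ℕ) (hn : Fintype.card V = n) :
    (∃ D : Finset V, IndepSet G D ∧ DomSet G D ∧ D.card ≤ k) ↔
    (∃ S : Finset (V ⊕ V ⊕ V), InSDS (extPath2 G) S ∧ S.card ≤ n + k) := by
  subst hn
  constructor
  · rintro ⟨D, hI, hD, hk⟩
    refine ⟨extPath2Lift D, ⟨hI.extPath2Lift, hD.secDomSet_extPath2Lift⟩, ?_⟩
    rw [card_extPath2Lift]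
    omega
  · rintro ⟨S, hS, hk⟩
    have hsize := hS.2.1.card_add_card_toLeft_le
    exact ⟨S.toLeft, hS.1.toLeft, hS.domSet_toLeft, by omega⟩
end

section
/- Let G' be the GP graph obtained from a graph G on n vertices by attaching to each vertex v_i a pendant path v_i – a_i – b_i – c_i. Then G has a dominating set of size at most k if and only if G' has a dominating set of size at most k + n. -/
variable {V : Type*} [Fintype V] [DecidableEq V]

/-- The GP graph obtained from `G`: to each vertex `vᵢ` attach a pendant path
`vᵢ – aᵢ – bᵢ – cᵢ`, where `aᵢ = Sum.inr (i,0)`, `bᵢ = Sum.inr (i,1)`, `cᵢ = Sum.inr (i,2)`. -/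
def gpGraph (G : SimpleGraph V) : SimpleGraph (V ⊕ V × Fin 3) :=
  SimpleGraph.fromRel (fun x y =>
    (∃ a b, x = Sum.inl a ∧ y = Sum.inl b ∧ G.Adj a b) ∨
    (∃ a, x = Sum.inl a ∧ y = Sum.inr (a, 0)) ∨
    (∃ a, x = Sum.inr (a, 0) ∧ y = Sum.inr (a, 1)) ∨
    (∃ a, x = Sum.inr (a, 1) ∧ y = Sum.inr (a, 2)))

/-!
Proof idea: each pendant path `vᵢ – aᵢ – bᵢ – cᵢ` is dominated by `bᵢ` alone, so adding all the
`bᵢ` to a dominating set of `G` gives one of `G'`. Conversely, a dominating set `D'` of `G'` must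
contain `bᵢ` or `cᵢ` (to dominate `cᵢ`) for every `i`, which accounts for `n` of its elements;
projecting the remaining elements, which lie among the `vᵢ` and `aᵢ`, to their root `vᵢ` gives a
dominating set of `G`, since `aᵢ` only dominates `vᵢ` among the vertices of `G`.
-/

open Finset

variable {G : SimpleGraph V}

section GPGraph

omit [Fintype V] [DecidableEq V]

-- `gpRoot` and `gpDepth` send `vᵢ, aᵢ, bᵢ, cᵢ` to `vᵢ` and to `0, 1, 2, 3` respectively.
def gpRoot : V ⊕ V × Fin 3 → V := Sum.elim id Prod.fst

def gpDepth : V ⊕ V × Fin 3 → ℕ := Sum.elim (fun _ => 0) (fun p => p.2.val + 1)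

@[simp]
lemma gpGraph_adj_inl_inl {a b : V} : (gpGraph G).Adj (.inl a) (.inl b) ↔ G.Adj a b := by
  simpa [gpGraph, G.adj_comm b a] using fun h : G.Adj a b => h.ne

@[simp]
lemma gpGraph_adj_inl_inr {a b : V} {i : Fin 3} :
    (gpGraph G).Adj (.inl a) (.inr (b, i)) ↔ b = a ∧ i = 0 := by
  simp [gpGraph]

@[simp]
lemma gpGraph_adj_inr_inl {a b : V} {i : Fin 3} :
    (gpGraph G).Adj (.inr (b, i)) (.inl a) ↔ b = a ∧ i = 0 := by
  rw [SimpleGraph.adj_comm, gpGraph_adj_inl_inr]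

@[simp]
lemma gpGraph_adj_inr_inr {a b : V} {i j : Fin 3} :
    (gpGraph G).Adj (.inr (a, i)) (.inr (b, j)) ↔
      a = b ∧ (i.val + 1 = j.val ∨ j.val + 1 = i.val) := by
  rcases eq_or_ne a b with rfl | hab
  · fin_cases i <;> fin_cases j <;> simp [gpGraph]
  · simp [gpGraph, hab, hab.symm]

end GPGraph

omit [DecidableEq V] in
lemma domSet_gpGraph_disjSum {D : Finset V} (hD : DomSet G D) :
    DomSet (gpGraph G) (D.disjSum (univ ×ˢ {1})) := by
  rintro (v | ⟨v, i⟩)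
  · rcases hD v with hv | ⟨u, hu, huv⟩
    · exact .inl (by simpa)
    · exact .inr ⟨.inl u, by simpa, by simpa⟩
  · by_cases hi : i = 1
    · exact .inl (by simp [hi])
    · refine .inr ⟨.inr (v, 1), by simp, ?_⟩
      simp only [gpGraph_adj_inr_inr, true_and]
      omega

omit [Fintype V] in
lemma domSet_image_gpRoot {D' : Finset (V ⊕ V × Fin 3)} (hD' : DomSet (gpGraph G) D') :
    DomSet G ((D'.filter (gpDepth · ≤ 1)).image gpRoot) := by
  intro v
  simp only [mem_image, mem_filter]
  rcases hD' (.inl v) with hv | ⟨u | ⟨u, i⟩, hu, huv⟩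
  · exact .inl ⟨.inl v, ⟨hv, by simp [gpDepth]⟩, rfl⟩
  · exact .inr ⟨u, ⟨.inl u, ⟨hu, by simp [gpDepth]⟩, rfl⟩, by simpa using huv⟩
  · obtain ⟨rfl, rfl⟩ := gpGraph_adj_inr_inl.1 huv
    exact .inl ⟨.inr (u, 0), ⟨hu, by simp [gpDepth]⟩, rfl⟩

lemma card_le_card_filter_not_gpDepth_le_one {D' : Finset (V ⊕ V × Fin 3)}
    (hD' : DomSet (gpGraph G) D') :
    Fintype.card V ≤ #(D'.filter fun x => ¬ gpDepth x ≤ 1) := by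
  have hcover : univ ⊆ (D'.filter fun x => ¬ gpDepth x ≤ 1).image gpRoot := by
    intro v _
    simp only [mem_image, mem_filter]
    rcases hD' (.inr (v, 2)) with hv | ⟨u | ⟨u, i⟩, hu, huv⟩
    · exact ⟨_, ⟨hv, by simp [gpDepth]⟩, rfl⟩
    · simp at huv
    · obtain ⟨rfl, hi⟩ := gpGraph_adj_inr_inr.1 huv
      obtain rfl : i = 1 := by omega
      exact ⟨_, ⟨hu, by simp [gpDepth]⟩, rfl⟩
  calc Fintype.card V = #(univ : Finset V) := card_univ.symm
    _ ≤ _ := card_le_card hcover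
    _ ≤ _ := card_image_le

theorem stmt15 (G : SimpleGraph V) (n k : ℕ) (hn : Fintype.card V = n) :
    (∃ D : Finset V, DomSet G D ∧ D.card ≤ k) ↔
    (∃ D' : Finset (V ⊕ V × Fin 3), DomSet (gpGraph G) D' ∧ D'.card ≤ k + n) := by
  constructor
  · rintro ⟨D, hD, hk⟩
    refine ⟨_, domSet_gpGraph_disjSum hD, ?_⟩
    simp [card_disjSum, hn, hk]
  · rintro ⟨D', hD', hk⟩
    refine ⟨_, domSet_image_gpRoot hD', ?_⟩
    have hdeep := card_le_card_filter_not_gpDepth_le_one hD'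
    have hsplit := card_filter_add_card_filter_not (s := D') (gpDepth · ≤ 1)
    have hroot := card_image_le (s := D'.filter (gpDepth · ≤ 1)) (f := gpRoot)
    omega
end
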